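/- arXiv:2006.16049 — 6 statements merged into one kernel-verified Lean document; each statement's English description precedes it below -/
import Mathlib

section
/- Let (L, [·,…,·], ε, α, β) be an involutive multiplicative n-BiHom-Lie color algebra (α² = β² = id). Then the terms Lₖ of the derived sequence, defined by L₀ = L and Lₖ = [Lₖ₋₁, …, Lₖ₋₁], are BiHom-ideals of L. -/
open Finset TensorProduct

/-- An `n`-BiHom-Lie color algebra (with `n = arity = N+1`, so the structure parameter `N`
equals `n-1`): a `Γ`-graded `K`-vector space `L` with an even `(N+1)`-linear bracket,
a skew-symmetric bicharacter `ε`, and two even commuting linear maps `α, β` satisfying the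
`ε`-BiHom-skew-symmetry and the BiHom `ε`-Jacobi identity. -/
structure NBLCA (K : Type*) [Field K] (Γ : Type*) [AddCommGroup Γ] [DecidableEq Γ] (N : ℕ)
    (L : Type*) [AddCommGroup L] [Module K L] : Type _ where
  grading : Γ → Submodule K L
  internal : DirectSum.IsInternal grading
  ε : Γ → Γ → K
  α : L →ₗ[K] L
  β : L →ₗ[K] L
  bracket : MultilinearMap K (fun _ : Fin (N + 1) => L) L
  eps_ne : ∀ a b, ε a b ≠ 0
  eps_skew : ∀ a b, ε a b * ε b a = 1
  eps_add_right : ∀ a b c, ε a (b + c) = ε a b * ε a c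
  eps_add_left : ∀ a b c, ε (a + b) c = ε a c * ε b c
  α_even : ∀ (γ : Γ) (x : L), x ∈ grading γ → α x ∈ grading γ
  β_even : ∀ (γ : Γ) (x : L), x ∈ grading γ → β x ∈ grading γ
  αβ_comm : ∀ x, α (β x) = β (α x)
  bracket_grade : ∀ (d : Fin (N + 1) → Γ) (x : Fin (N + 1) → L),
    (∀ i, x i ∈ grading (d i)) → bracket x ∈ grading (∑ i, d i)
  skew : ∀ (d : Fin (N + 1) → Γ) (x : Fin (N + 1) → L), (∀ i, x i ∈ grading (d i)) →
    ∀ k : Fin N,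
      bracket (Fin.snoc (fun i : Fin N => β ((x ∘ Equiv.swap k.castSucc k.succ) i.castSucc))
          (α ((x ∘ Equiv.swap k.castSucc k.succ) (Fin.last N))))
        = (-(ε (d k.castSucc) (d k.succ))) •
          bracket (Fin.snoc (fun i : Fin N => β (x i.castSucc)) (α (x (Fin.last N))))
  jacobi : ∀ (dx : Fin N → Γ) (x : Fin N → L) (dy : Fin (N + 1) → Γ) (y : Fin (N + 1) → L),
    (∀ i, x i ∈ grading (dx i)) → (∀ i, y i ∈ grading (dy i)) →
    bracket (Fin.snoc (fun i : Fin N => β (β (x i)))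
        (bracket (Fin.snoc (fun i : Fin N => β (y i.castSucc)) (α (y (Fin.last N))))))
      = ∑ k : Fin (N + 1), ε (∑ i, dx i) (∑ l ∈ Finset.Iio k, dy l) •
          bracket (Function.update (fun i => β (β (y i))) k
            (bracket (Fin.snoc (fun i : Fin N => β (x i)) (α (y k)))))

namespace NBLCA

variable {K : Type*} [Field K] {Γ : Type*} [AddCommGroup Γ] [DecidableEq Γ] {N : ℕ}
  {L : Type*} [AddCommGroup L] [Module K L]

/-- `α` and `β` are morphisms for the bracket. -/
def IsMultiplicative (A : NBLCA K Γ N L) : Prop :=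
  (∀ x, A.α (A.bracket x) = A.bracket fun i => A.α (x i)) ∧
  (∀ x, A.β (A.bracket x) = A.bracket fun i => A.β (x i))

/-- A linear map homogeneous of degree `d`. -/
def HasDegree (A : NBLCA K Γ N L) (d : Γ) (D : L →ₗ[K] L) : Prop :=
  ∀ (γ : Γ) (x : L), x ∈ A.grading γ → D x ∈ A.grading (γ + d)

/-- A linear map commuting with the twisting maps `α` and `β`. -/
def CommutesTw (A : NBLCA K Γ N L) (D : L →ₗ[K] L) : Prop :=
  (∀ x, D (A.α x) = A.α (D x)) ∧ (∀ x, D (A.β x) = A.β (D x))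

/-- The twisting map `βʳ ∘ αᵏ`. -/
def tw (A : NBLCA K Γ N L) (k r : ℕ) : L →ₗ[K] L := (A.β ^ r) ∘ₗ (A.α ^ k)

/-- `(αᵏ, βʳ)`-derivation of degree `d`. -/
def IsDer (A : NBLCA K Γ N L) (k r : ℕ) (d : Γ) (D : L →ₗ[K] L) : Prop :=
  A.HasDegree d D ∧ A.CommutesTw D ∧
  ∀ (dx : Fin (N + 1) → Γ) (x : Fin (N + 1) → L), (∀ i, x i ∈ A.grading (dx i)) →
    D (A.bracket x) = ∑ i : Fin (N + 1), A.ε d (∑ l ∈ Finset.Iio i, dx l) •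
      A.bracket (Function.update (fun j => A.tw k r (x j)) i (D (x i)))

/-- `(αᵏ, βʳ)`-centroid elements of degree `d`. -/
def IsCent (A : NBLCA K Γ N L) (k r : ℕ) (d : Γ) (D : L →ₗ[K] L) : Prop :=
  A.HasDegree d D ∧ A.CommutesTw D ∧
  ∀ (i : Fin (N + 1)) (dx : Fin (N + 1) → Γ) (x : Fin (N + 1) → L),
    (∀ j, x j ∈ A.grading (dx j)) →
    D (A.bracket x) = A.ε d (∑ l ∈ Finset.Iio i, dx l) •
      A.bracket (Function.update (fun j => A.tw k r (x j)) i (D (x i)))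

/-- `(αᵏ, βʳ)`-quasicentroid elements of degree `d`. -/
def IsQC (A : NBLCA K Γ N L) (k r : ℕ) (d : Γ) (D : L →ₗ[K] L) : Prop :=
  A.HasDegree d D ∧ A.CommutesTw D ∧
  ∀ (i : Fin (N + 1)) (dx : Fin (N + 1) → Γ) (x : Fin (N + 1) → L),
    (∀ j, x j ∈ A.grading (dx j)) →
    A.bracket (Function.update (fun j => A.tw k r (x j)) 0 (D (x 0)))
      = A.ε d (∑ l ∈ Finset.Iio i, dx l) •
        A.bracket (Function.update (fun j => A.tw k r (x j)) i (D (x i)))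

/-- Central `(αᵏ, βʳ)`-derivation of degree `d`. -/
def IsZDer (A : NBLCA K Γ N L) (k r : ℕ) (d : Γ) (D : L →ₗ[K] L) : Prop :=
  A.HasDegree d D ∧ A.CommutesTw D ∧
  ∀ (dx : Fin (N + 1) → Γ) (x : Fin (N + 1) → L), (∀ i, x i ∈ A.grading (dx i)) →
    D (A.bracket x) = 0 ∧
    ∀ i : Fin (N + 1), A.ε d (∑ l ∈ Finset.Iio i, dx l) •
      A.bracket (Function.update (fun j => A.tw k r (x j)) i (D (x i))) = 0

/-- BiHom-ideal of an `n`-BiHom-Lie color algebra. -/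
def IsBiHomIdeal (A : NBLCA K Γ N L) (I : Submodule K L) : Prop :=
  (∀ x ∈ I, A.α x ∈ I) ∧ (∀ x ∈ I, A.β x ∈ I) ∧
  ∀ x : Fin (N + 1) → L, x 0 ∈ I → A.bracket x ∈ I

/-- The derived sequence `L₀ = L`, `Lₘ₊₁ = [Lₘ, …, Lₘ]`. -/
def derived (A : NBLCA K Γ N L) : ℕ → Submodule K L
  | 0 => ⊤
  | m + 1 => Submodule.span K
      {z | ∃ x : Fin (N + 1) → L, (∀ i, x i ∈ A.derived m) ∧ z = A.bracket x}

end NBLCA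

section DerivedIdealAux

variable {K : Type*} [Field K] {Γ : Type*} [AddCommGroup Γ] [DecidableEq Γ] {N : ℕ}
  {L : Type*} [AddCommGroup L] [Module K L]

/-- A multilinear map sends tuples of span members into a submodule, provided it sends
tuples of generators into it. -/
private lemma multi_span {n : ℕ} (f : MultilinearMap K (fun _ : Fin n => L) L)
    (T : Submodule K L) (s : Fin n → Set L)
    (H : ∀ c : Fin n → L, (∀ j, c j ∈ s j) → f c ∈ T) :
    ∀ y : Fin n → L, (∀ j, y j ∈ Submodule.span K (s j)) → f y ∈ T := by
  classical
  suffices h : ∀ t : Finset (Fin n), ∀ y : Fin n → L,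
      (∀ j ∈ t, y j ∈ Submodule.span K (s j)) → (∀ j ∉ t, y j ∈ s j) → f y ∈ T by
    intro y hy
    exact h Finset.univ y (fun j _ => hy j) (fun j hj => absurd (Finset.mem_univ j) hj)
  intro t
  induction t using Finset.induction_on with
  | empty => intro y _ h2; exact H y fun j => h2 j (by simp)
  | @insert a t ha ih =>
    intro y h1 h2
    have key : ∀ c, c ∈ Submodule.span K (s a) → f (Function.update y a c) ∈ T := by
      intro c hc
      induction hc using Submodule.span_induction with
      | mem c hcs =>
        apply ih
        · intro j hj
          have hj' : j ≠ a := fun h => ha (h ▸ hj)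
          rw [Function.update_of_ne hj']
          exact h1 j (Finset.mem_insert_of_mem hj)
        · intro j hj
          by_cases hja : j = a
          · subst hja; rw [Function.update_self]; exact hcs
          · rw [Function.update_of_ne hja]
            exact h2 j (by simp [hja] at hj ⊢; exact hj)
      | zero =>
        rw [f.map_coord_zero a (Function.update_self a 0 y)]
        exact T.zero_mem
      | add u v hu hv ihu ihv =>
        rw [f.map_update_add]; exact T.add_mem ihu ihv
      | smul r u hu ihu =>
        rw [f.map_update_smul]; exact T.smul_mem r ihu
    have := key (y a) (h1 a (Finset.mem_insert_self a t))
    rwa [Function.update_eq_self] at this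

namespace NBLCA

variable (A : NBLCA K Γ N L)

private lemma derived_succ_eq (m : ℕ) :
    A.derived (m + 1) = Submodule.span K
      {z | ∃ x : Fin (N + 1) → L, (∀ i, x i ∈ A.derived m) ∧ z = A.bracket x} := rfl

private lemma mem_derived_succ {m : ℕ} (x : Fin (N + 1) → L)
    (hx : ∀ i, x i ∈ A.derived m) : A.bracket x ∈ A.derived (m + 1) := by
  rw [derived_succ_eq]
  exact Submodule.subset_span ⟨x, hx, rfl⟩

private lemma hom_span :
    Submodule.span K {h : L | ∃ γ, h ∈ A.grading γ} = ⊤ := by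
  apply le_antisymm le_top
  rw [← A.internal.submodule_iSup_eq_top]
  apply iSup_le
  intro γ x hx
  exact Submodule.subset_span ⟨γ, hx⟩

/-- closure of each derived term under α and β -/
private lemma derived_tw_closed (hmul : A.IsMultiplicative) (m : ℕ) :
    (∀ x ∈ A.derived m, A.α x ∈ A.derived m) ∧ (∀ x ∈ A.derived m, A.β x ∈ A.derived m) := by
  induction m with
  | zero => exact ⟨fun x _ => Submodule.mem_top, fun x _ => Submodule.mem_top⟩
  | succ m ih =>
    constructor
    · intro x hx
      rw [derived_succ_eq] at hx ⊢
      induction hx using Submodule.span_induction with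
      | mem z hz =>
        obtain ⟨y, hy, rfl⟩ := hz
        rw [hmul.1]
        exact Submodule.subset_span ⟨fun j => A.α (y j), fun j => ih.1 _ (hy j), rfl⟩
      | zero => rw [map_zero]; exact Submodule.zero_mem _
      | add u v _ _ ihu ihv => rw [map_add]; exact Submodule.add_mem _ ihu ihv
      | smul r u _ ihu => rw [map_smul]; exact Submodule.smul_mem _ r ihu
    · intro x hx
      rw [derived_succ_eq] at hx ⊢
      induction hx using Submodule.span_induction with
      | mem z hz =>
        obtain ⟨y, hy, rfl⟩ := hz
        rw [hmul.2]
        exact Submodule.subset_span ⟨fun j => A.β (y j), fun j => ih.2 _ (hy j), rfl⟩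
      | zero => rw [map_zero]; exact Submodule.zero_mem _
      | add u v _ _ ihu ihv => rw [map_add]; exact Submodule.add_mem _ ihu ihv
      | smul r u _ ihu => rw [map_smul]; exact Submodule.smul_mem _ r ihu

/-- homogeneous brackets of homogeneous elements of `derived m` -/
private def Gset (m : ℕ) : Set L :=
  {g | ∃ (y : Fin (N + 1) → L) (dy : Fin (N + 1) → Γ),
    (∀ j, y j ∈ A.derived m ∧ y j ∈ A.grading (dy j)) ∧ g = A.bracket y}

private lemma Gset_homog {m : ℕ} {g : L} (hg : g ∈ A.Gset m) : ∃ γ, g ∈ A.grading γ := by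
  obtain ⟨y, dy, hy, rfl⟩ := hg
  exact ⟨∑ j, dy j, A.bracket_grade dy y fun j => (hy j).2⟩

private lemma Gset_mem_derived {m : ℕ} {g : L} (hg : g ∈ A.Gset m) :
    g ∈ A.derived (m + 1) := by
  obtain ⟨y, dy, hy, rfl⟩ := hg
  exact A.mem_derived_succ y fun j => (hy j).1

private lemma Gset_alpha (hmul : A.IsMultiplicative) {m : ℕ} {g : L} (hg : g ∈ A.Gset m) :
    A.α g ∈ A.Gset m := by
  obtain ⟨y, dy, hy, rfl⟩ := hg
  exact ⟨fun j => A.α (y j), dy, fun j =>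
    ⟨(A.derived_tw_closed hmul m).1 _ (hy j).1, A.α_even _ _ (hy j).2⟩, hmul.1 y⟩

private lemma Gset_beta (hmul : A.IsMultiplicative) {m : ℕ} {g : L} (hg : g ∈ A.Gset m) :
    A.β g ∈ A.Gset m := by
  obtain ⟨y, dy, hy, rfl⟩ := hg
  exact ⟨fun j => A.β (y j), dy, fun j =>
    ⟨(A.derived_tw_closed hmul m).2 _ (hy j).1, A.β_even _ _ (hy j).2⟩, hmul.2 y⟩

/-- each derived term lies in the span of its homogeneous elements -/
private lemma derived_le_span_homog : ∀ m : ℕ,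
    A.derived m ≤ Submodule.span K {h : L | (∃ γ, h ∈ A.grading γ) ∧ h ∈ A.derived m} := by
  intro m
  induction m with
  | zero =>
    intro x _
    have hx : x ∈ Submodule.span K {h : L | ∃ γ, h ∈ A.grading γ} := by
      rw [A.hom_span]; exact Submodule.mem_top
    have hsub : {h : L | ∃ γ, h ∈ A.grading γ} ⊆
        {h : L | (∃ γ, h ∈ A.grading γ) ∧ h ∈ A.derived 0} :=
      fun h hh => ⟨hh, Submodule.mem_top⟩
    exact Submodule.span_mono hsub hx
  | succ m ih =>
    rw [derived_succ_eq]
    rw [Submodule.span_le]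
    rintro z ⟨y, hy, rfl⟩
    refine multi_span A.bracket _ (fun _ => {h : L | (∃ γ, h ∈ A.grading γ) ∧ h ∈ A.derived m})
      ?_ y (fun j => ih (hy j))
    intro c hc
    choose d hd using fun j => (hc j).1
    apply Submodule.subset_span
    exact ⟨⟨∑ j, d j, A.bracket_grade d c hd⟩, A.mem_derived_succ c fun j => (hc j).2⟩

private lemma derived_succ_le_span_G (m : ℕ) :
    A.derived (m + 1) ≤ Submodule.span K (A.Gset m) := by
  rw [derived_succ_eq, Submodule.span_le]
  rintro z ⟨y, hy, rfl⟩
  refine multi_span A.bracket _ (fun _ => {h : L | (∃ γ, h ∈ A.grading γ) ∧ h ∈ A.derived m})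
    ?_ y (fun j => A.derived_le_span_homog m (hy j))
  intro c hc
  choose d hd using fun j => (hc j).1
  apply Submodule.subset_span
  exact ⟨c, d, fun j => ⟨(hc j).2, hd j⟩, rfl⟩

private def Tb (w : Fin (N + 1) → L) : L :=
  A.bracket (Fin.snoc (fun i : Fin N => A.β (w i.castSucc)) (A.α (w (Fin.last N))))

private lemma core (hmul : A.IsMultiplicative) (hα : ∀ x, A.α (A.α x) = x)
    (hβ : ∀ x, A.β (A.β x) = x) (m : ℕ)
    (hS : ∀ (x : Fin (N + 1) → L) (i : Fin (N + 1)), x i ∈ A.derived m →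
      A.bracket x ∈ A.derived m) :
    ∀ (i : Fin (N + 1)) (w : Fin (N + 1) → L) (d : Fin (N + 1) → Γ),
      (∀ j, w j ∈ A.grading (d j)) → w i ∈ A.Gset m → A.Tb w ∈ A.derived (m + 1) := by
  intro i
  induction i using Fin.reverseInduction with
  | last =>
    intro w d hw hwG
    obtain ⟨y, dy, hy, hwlast⟩ := hwG
    set x : Fin N → L := fun j => A.β (w j.castSucc) with hxd
    have hxg : ∀ j : Fin N, x j ∈ A.grading (d j.castSucc) := by
      intro j; rw [hxd]; exact A.β_even _ _ (hw _)
    set y' : Fin (N + 1) → L :=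
      Fin.snoc (fun j : Fin N => A.β (A.α (y j.castSucc))) (y (Fin.last N)) with hyd
    have hy'g : ∀ j, y' j ∈ A.grading (dy j) := by
      intro j
      induction j using Fin.lastCases with
      | last => rw [hyd, Fin.snoc_last]; exact (hy _).2
      | cast j =>
        rw [hyd, Fin.snoc_castSucc]
        exact A.β_even _ _ (A.α_even _ _ (hy _).2)
    have hy'D : ∀ j, y' j ∈ A.derived m := by
      intro j
      induction j using Fin.lastCases with
      | last => rw [hyd, Fin.snoc_last]; exact (hy _).1
      | cast j =>
        rw [hyd, Fin.snoc_castSucc]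
        exact (A.derived_tw_closed hmul m).2 _ ((A.derived_tw_closed hmul m).1 _ (hy _).1)
    have jac := A.jacobi (fun j => d j.castSucc) x dy y' hxg hy'g
    have e1 : A.Tb w = A.bracket (Fin.snoc (fun i : Fin N => A.β (A.β (x i)))
        (A.bracket (Fin.snoc (fun i : Fin N => A.β (y' i.castSucc))
          (A.α (y' (Fin.last N)))))) := by
      unfold Tb
      congr 1
      funext j
      induction j using Fin.lastCases with
      | last =>
        rw [Fin.snoc_last, Fin.snoc_last]
        have e2 : (Fin.snoc (fun i : Fin N => A.β (y' i.castSucc))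
            (A.α (y' (Fin.last N))) : Fin (N + 1) → L) = fun j => A.α (y j) := by
          funext j
          induction j using Fin.lastCases with
          | last => rw [Fin.snoc_last, hyd, Fin.snoc_last]
          | cast j => rw [Fin.snoc_castSucc, hyd, Fin.snoc_castSucc, hβ]
        rw [e2, ← hmul.1, hwlast]
      | cast j =>
        rw [Fin.snoc_castSucc, Fin.snoc_castSucc, hxd, hβ]
    rw [e1, jac]
    apply Submodule.sum_mem
    intro k _
    apply Submodule.smul_mem
    apply A.mem_derived_succ
    intro j
    by_cases hjk : j = k
    · subst hjk
      rw [Function.update_self]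
      apply hS _ (Fin.last N)
      rw [Fin.snoc_last]
      exact (A.derived_tw_closed hmul m).1 _ (hy'D j)
    · rw [Function.update_of_ne hjk, hβ]
      exact hy'D j
  | cast i ih =>
    intro w d hw hwG
    have hw' : ∀ j, (w ∘ Equiv.swap i.castSucc i.succ) j ∈
        A.grading ((d ∘ Equiv.swap i.castSucc i.succ) j) := fun j => hw _
    have hG' : (w ∘ Equiv.swap i.castSucc i.succ) i.succ ∈ A.Gset m := by
      show w (Equiv.swap i.castSucc i.succ i.succ) ∈ _
      rw [Equiv.swap_apply_right]
      exact hwG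
    have h1 := ih (w ∘ Equiv.swap i.castSucc i.succ) (d ∘ Equiv.swap i.castSucc i.succ) hw' hG'
    have hs := A.skew (d ∘ Equiv.swap i.castSucc i.succ) (w ∘ Equiv.swap i.castSucc i.succ) hw' i
    have e : (w ∘ Equiv.swap i.castSucc i.succ) ∘ Equiv.swap i.castSucc i.succ = w := by
      funext j; simp [Function.comp, Equiv.swap_apply_self]
    rw [e] at hs
    unfold Tb at h1 ⊢
    rw [hs]
    exact Submodule.smul_mem _ _ h1

private lemma derived_strong (hmul : A.IsMultiplicative) (hα : ∀ x, A.α (A.α x) = x)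
    (hβ : ∀ x, A.β (A.β x) = x) :
    ∀ (m : ℕ) (x : Fin (N + 1) → L) (i : Fin (N + 1)),
      x i ∈ A.derived m → A.bracket x ∈ A.derived m := by
  intro m
  induction m with
  | zero => intro x i _; exact Submodule.mem_top
  | succ m ih =>
    intro x i hx
    classical
    refine multi_span A.bracket (A.derived (m + 1))
      (fun j => if j = i then A.Gset m else {h : L | ∃ γ, h ∈ A.grading γ}) ?_ x ?_
    · intro c hc
      have hci : c i ∈ A.Gset m := by simpa using hc i
      have hcj : ∀ j, ∃ γ, c j ∈ A.grading γ := by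
        intro j
        by_cases hj : j = i
        · subst hj; exact A.Gset_homog hci
        · simpa [hj] using hc j
      choose d hd using hcj
      set w : Fin (N + 1) → L :=
        Function.update c (Fin.last N) (A.α (A.β (c (Fin.last N)))) with hwd
      have hwg : ∀ j, w j ∈ A.grading (d j) := by
        intro j
        by_cases hj : j = Fin.last N
        · subst hj; rw [hwd, Function.update_self]
          exact A.α_even _ _ (A.β_even _ _ (hd _))
        · rw [hwd, Function.update_of_ne hj]; exact hd j
      have hwi : w i ∈ A.Gset m := by
        by_cases hj : i = Fin.last N
        · subst hj; rw [hwd, Function.update_self]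
          exact A.Gset_alpha hmul (A.Gset_beta hmul hci)
        · rw [hwd, Function.update_of_ne hj]; exact hci
      have hT := A.core hmul hα hβ m ih i w d hwg hwi
      have e : A.bracket c = A.β (A.Tb w) := by
        unfold Tb
        have e2 : (Fin.snoc (fun j : Fin N => A.β (w j.castSucc))
            (A.α (w (Fin.last N))) : Fin (N + 1) → L) = fun j => A.β (c j) := by
          funext j
          induction j using Fin.lastCases with
          | last => rw [Fin.snoc_last, hwd, Function.update_self, hα]
          | cast j =>
            rw [Fin.snoc_castSucc, hwd, Function.update_of_ne (Fin.castSucc_lt_last j).ne]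
        rw [e2, ← hmul.2, hβ]
      rw [e]
      exact (A.derived_tw_closed hmul (m + 1)).2 _ hT
    · intro j
      by_cases hj : j = i
      · subst hj; simpa using A.derived_succ_le_span_G m hx
      · have hh : x j ∈ Submodule.span K {h : L | ∃ γ, h ∈ A.grading γ} := by
          rw [A.hom_span]; exact Submodule.mem_top
        simpa [hj] using hh

end NBLCA

end DerivedIdealAux
/-- In an involutive multiplicative `n`-BiHom-Lie color algebra, every term of the
derived sequence is a BiHom-ideal. -/
theorem derived_isBiHomIdeal {K : Type*} [Field K] {Γ : Type*} [AddCommGroup Γ] [DecidableEq Γ]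
    {N : ℕ} {L : Type*} [AddCommGroup L] [Module K L]
    (A : NBLCA K Γ N L) (hmul : A.IsMultiplicative)
    (hα : ∀ x, A.α (A.α x) = x) (hβ : ∀ x, A.β (A.β x) = x) :
    ∀ m : ℕ, A.IsBiHomIdeal (A.derived m) := by
  intro m
  exact ⟨(A.derived_tw_closed hmul m).1, (A.derived_tw_closed hmul m).2,
    fun x hx => A.derived_strong hmul hα hβ m x 0 hx⟩
end

section
/- Let (A, ·) be a commutative associative K-algebra and (L, [·,…,·], ε, α, β) an n-BiHom-Lie color algebra. Then A⊗L, graded by (A⊗L)_γ = A⊗L_γ, with bracket [a₁⊗x₁,…,aₙ⊗xₙ]' := a₁⋯aₙ ⊗ [x₁,…,xₙ], maps α'(a⊗x)=a⊗α(x), β'(a⊗x)=a⊗β(x), and bicharacter induced by ε, is an n-BiHom-Lie color algebra. -/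
open Finset TensorProduct

/-!
Everything is extension of scalars from `K` to `C`. The bracket of `L` extends to a
`C`-multilinear map on `C ⊗ L` (by recursion on the arity, currying off the first argument),
`α` and `β` extend to `C`-linear maps, and `C ⊗ L_γ` is the `C`-span of `1 ⊗ L_γ`. Hence an
identity between `C`-multilinear expressions in homogeneous arguments only has to be checked on
tensors `1 ⊗ y`, where it is the image of the corresponding identity of `L` under `1 ⊗ -`. The
two sides of the Jacobi identity are multilinear in the inner and in the outer arguments
separately, so there this reduction is made twice.
-/

namespace MultilinearMap

section
variable {R S T ι : Type*} {M₁ : ι → Type*} {M₂ : Type*} [Semiring R]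
  [∀ i, AddCommMonoid (M₁ i)] [∀ i, Module R (M₁ i)] [AddCommMonoid M₂] [Module R M₂]
  [Monoid S] [Monoid T] [DistribMulAction S M₂] [DistribMulAction T M₂]
  [SMulCommClass R S M₂] [SMulCommClass R T M₂]

instance [SMul S T] [IsScalarTower S T M₂] : IsScalarTower S T (MultilinearMap R M₁ M₂) :=
  ⟨fun _ _ _ => ext fun _ => smul_assoc _ _ _⟩

instance [SMulCommClass S T M₂] : SMulCommClass S T (MultilinearMap R M₁ M₂) :=
  ⟨fun _ _ _ => ext fun _ => smul_comm _ _ _⟩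

end

variable {R A M N : Type*} [CommSemiring R] [CommSemiring A] [Algebra R A]
  [AddCommMonoid M] [Module R M] [AddCommMonoid N] [Module R N]

variable (A) in
noncomputable def baseChangeₗ : ∀ n : ℕ,
    MultilinearMap R (fun _ : Fin n => M) N →ₗ[R]
      MultilinearMap A (fun _ : Fin n => A ⊗[R] M) (A ⊗[R] N)
  | 0 => LinearMap.restrictScalars R
        (constLinearEquivOfIsEmpty A A (fun _ : Fin 0 => A ⊗[R] M) (A ⊗[R] N)).toLinearMap ∘ₗ
      TensorProduct.mk R A N 1 ∘ₗ
      (constLinearEquivOfIsEmpty R R (fun _ : Fin 0 => M) N).symm.toLinearMap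
  | n + 1 => (multilinearCurryLeftEquiv A _ _).symm.toLinearMap.restrictScalars R ∘ₗ
      (LinearMap.liftBaseChangeEquiv A).toLinearMap.restrictScalars R ∘ₗ
      LinearMap.llcomp R M _ _ (baseChangeₗ n) ∘ₗ
      (multilinearCurryLeftEquiv R _ _).toLinearMap

variable (A) in
noncomputable def baseChange {n : ℕ} (f : MultilinearMap R (fun _ : Fin n => M) N) :
    MultilinearMap A (fun _ : Fin n => A ⊗[R] M) (A ⊗[R] N) :=
  baseChangeₗ A n f

theorem baseChange_tmul : ∀ {n : ℕ} (f : MultilinearMap R (fun _ : Fin n => M) N)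
    (c : Fin n → A) (x : Fin n → M),
    f.baseChange A (fun i => c i ⊗ₜ x i) = (∏ i, c i) ⊗ₜ f x
  | 0, f, c, x => by
      simp [baseChange, baseChangeₗ, Subsingleton.elim x 0]
  | n + 1, f, c, x => by
      have ih : baseChangeₗ A n (f.curryLeft (x 0)) (Fin.tail fun i => c i ⊗ₜ x i) = _ :=
        baseChange_tmul (f.curryLeft (x 0)) (Fin.tail c) (Fin.tail x)
      simp only [baseChange, baseChangeₗ, LinearMap.coe_comp, Function.comp_apply,
        LinearEquiv.coe_coe, LinearMap.coe_restrictScalars, multilinearCurryLeftEquiv_apply,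
        multilinearCurryLeftEquiv_symm_apply, LinearMap.uncurryLeft_apply]
      rw [← LinearMap.liftBaseChange, LinearMap.liftBaseChange_tmul, LinearMap.llcomp_apply,
        smul_apply, ih, smul_tmul', smul_eq_mul, Fin.prod_univ_succ, curryLeft_apply,
        Fin.cons_self_tail]
      rfl

theorem baseChange_one_tmul {n : ℕ} (f : MultilinearMap R (fun _ : Fin n => M) N)
    (x : Fin n → M) :
    f.baseChange A (fun i => 1 ⊗ₜ x i) = 1 ⊗ₜ f x := by
  simp [baseChange_tmul]

theorem eq_of_forall_one_tmul {ι P : Type*} [Finite ι] [AddCommMonoid P] [Module A P]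
    {p : ι → Submodule R M} {f g : MultilinearMap A (fun _ : ι => A ⊗[R] M) P}
    (h : ∀ y : ι → M, (∀ i, y i ∈ p i) → f (fun i => 1 ⊗ₜ y i) = g (fun i => 1 ⊗ₜ y i))
    {x : ι → A ⊗[R] M} (hx : ∀ i, x i ∈ (p i).baseChange A) : f x = g x := by
  let gen : ∀ i, p i → (p i).baseChange A := fun i y =>
    ⟨1 ⊗ₜ (y : M), Submodule.tmul_mem_baseChange_of_mem 1 y.2⟩
  have hgen : ∀ i, Submodule.span A (Set.range (gen i)) = ⊤ := by
    intro i
    apply Submodule.map_injective_of_injective ((p i).baseChange A).injective_subtype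
    rw [Submodule.map_span, Submodule.map_top, Submodule.range_subtype, ← Set.range_comp]
    conv_rhs => rw [Submodule.baseChange_eq_span]
    congr 1
    ext z
    simp [gen]
  have := ext_of_span_eq_top hgen (φ := f.compLinearMap fun i => ((p i).baseChange A).subtype)
    (φ' := g.compLinearMap fun i => ((p i).baseChange A).subtype)
    (fun y => h (fun i => y i) fun i => (y i).2)
  exact congr($this fun i => ⟨x i, hx i⟩)

theorem map_mem_of_forall_one_tmul {S : Type*} [CommRing S] [Algebra R S] {ι P : Type*}
    [Finite ι] [AddCommGroup P] [Module S P]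
    {p : ι → Submodule R M} {q : Submodule S P} {f : MultilinearMap S (fun _ : ι => S ⊗[R] M) P}
    (h : ∀ y : ι → M, (∀ i, y i ∈ p i) → f (fun i => 1 ⊗ₜ y i) ∈ q)
    {x : ι → S ⊗[R] M} (hx : ∀ i, x i ∈ (p i).baseChange S) : f x ∈ q := by
  rw [← Submodule.Quotient.mk_eq_zero]
  exact eq_of_forall_one_tmul (f := q.mkQ.compMultilinearMap f) (g := 0)
    (fun y hy => (Submodule.Quotient.mk_eq_zero q).2 (h y hy)) hx

end MultilinearMap

namespace Submodule

variable {R A M N : Type*} [CommSemiring R] [CommSemiring A] [Algebra R A]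
  [AddCommMonoid M] [Module R M] [AddCommMonoid N] [Module R N]

theorem map_baseChange_le (p : Submodule R M) (f : M →ₗ[R] N) :
    (p.baseChange A).map (f.baseChange A) ≤ (p.map f).baseChange A := by
  rw [map_le_iff_le_comap, baseChange_eq_span, span_le]
  rintro _ ⟨y, hy, rfl⟩
  exact tmul_mem_baseChange_of_mem 1 (mem_map_of_mem hy)

end Submodule

theorem Fin.snoc_linearMap_apply {R M M' : Type*} [Semiring R] [AddCommMonoid M] [Module R M]
    [AddCommMonoid M'] [Module R M'] {n : ℕ} (b a : M →ₗ[R] M') (x : Fin (n + 1) → M) :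
    (fun j => (Fin.snoc (fun _ => b) a : Fin (n + 1) → M →ₗ[R] M') j (x j)) =
      Fin.snoc (fun i => b (x i.castSucc)) (a (x (Fin.last n))) := by
  funext j
  cases j using Fin.lastCases <;> simp

theorem Function.update_linearMap_apply {R M M' : Type*} [Semiring R] [AddCommMonoid M]
    [Module R M] [AddCommMonoid M'] [Module R M'] {n : ℕ} (b a : M →ₗ[R] M') (k : Fin n)
    (x : Fin n → M) :
    (fun j => Function.update (fun _ => b) k a j (x j)) =
      Function.update (fun j => b (x j)) k (a (x k)) := by
  funext j
  by_cases h : j = k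
  · subst h; simp
  · simp [h]

namespace TensorProduct

variable {R A M : Type*} [CommSemiring R] [Semiring A] [Algebra R A] [AddCommMonoid M]
  [Module R M]

@[simp]
theorem snoc_one_tmul {n : ℕ} (u : Fin n → M) (z : M) :
    Fin.snoc (fun i => (1 : A) ⊗ₜ[R] u i) (1 ⊗ₜ z) =
      fun j => (1 : A) ⊗ₜ[R] (Fin.snoc u z : Fin (n + 1) → M) j :=
  (Fin.comp_snoc _ u z).symm

@[simp]
theorem update_one_tmul {n : ℕ} (u : Fin n → M) (k : Fin n) (z : M) :
    Function.update (fun i => (1 : A) ⊗ₜ[R] u i) k (1 ⊗ₜ z) =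
      fun j => (1 : A) ⊗ₜ[R] Function.update u k z j :=
  (Function.comp_update _ u k z).symm

end TensorProduct

namespace NBLCA

variable {K : Type*} [Field K] {Γ : Type*} [AddCommGroup Γ] [DecidableEq Γ] {N : ℕ}
  {L : Type*} [AddCommGroup L] [Module K L] {C : Type*} [CommRing C] [Algebra K C]
  (A : NBLCA K Γ N L)

local notation "α'" => LinearMap.baseChange C (NBLCA.α A)
local notation "β'" => LinearMap.baseChange C (NBLCA.β A)
local notation "br'" => MultilinearMap.baseChange C (NBLCA.bracket A)

theorem baseChange_skew (d : Fin (N + 1) → Γ) (x : Fin (N + 1) → C ⊗[K] L)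
    (hx : ∀ i, x i ∈ (A.grading (d i)).baseChange C) (k : Fin N) :
    br' (Fin.snoc (fun i : Fin N => β' ((x ∘ Equiv.swap k.castSucc k.succ) i.castSucc))
        (α' ((x ∘ Equiv.swap k.castSucc k.succ) (Fin.last N)))) =
      (-(A.ε (d k.castSucc) (d k.succ))) •
        br' (Fin.snoc (fun i : Fin N => β' (x i.castSucc)) (α' (x (Fin.last N)))) := by
  set tw := (br').compLinearMap
    (Fin.snoc (fun _ => β') α' : Fin (N + 1) → C ⊗[K] L →ₗ[C] C ⊗[K] L)
  have key : tw.domDomCongr (Equiv.swap k.castSucc k.succ) x =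
      ((-(A.ε (d k.castSucc) (d k.succ))) • tw) x := by
    refine MultilinearMap.eq_of_forall_one_tmul (fun y hy => ?_) hx
    simp only [tw, MultilinearMap.domDomCongr_apply, smul_apply,
      MultilinearMap.compLinearMap_apply]
    rw [Fin.snoc_linearMap_apply, Fin.snoc_linearMap_apply]
    simp only [LinearMap.baseChange_tmul, TensorProduct.snoc_one_tmul,
      MultilinearMap.baseChange_one_tmul]
    rw [← tmul_smul, ← A.skew d y hy k]
    rfl
  simpa only [tw, MultilinearMap.domDomCongr_apply, smul_apply,
    MultilinearMap.compLinearMap_apply, Fin.snoc_linearMap_apply, Function.comp_apply] using key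

theorem baseChange_jacobi_one_tmul_right (dx : Fin N → Γ) (x : Fin N → C ⊗[K] L)
    (dy : Fin (N + 1) → Γ) (w : Fin (N + 1) → L)
    (hx : ∀ i, x i ∈ (A.grading (dx i)).baseChange C) (hw : ∀ i, w i ∈ A.grading (dy i)) :
    br' (Fin.snoc (fun i => β' (β' (x i)))
        (br' (Fin.snoc (fun i => β' (1 ⊗ₜ w i.castSucc)) (α' (1 ⊗ₜ w (Fin.last N)))))) =
      ∑ k, A.ε (∑ i, dx i) (∑ l ∈ Iio k, dy l) •
        br' (Function.update (fun i => β' (β' (1 ⊗ₜ w i))) k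
          (br' (Fin.snoc (fun i => β' (x i)) (α' (1 ⊗ₜ w k))))) := by
  have pure : ∀ u : Fin N → L, (∀ i, u i ∈ A.grading (dx i)) →
      br' (Fin.snoc (fun i => β' (β' (1 ⊗ₜ u i)))
        (br' (Fin.snoc (fun i => β' (1 ⊗ₜ w i.castSucc)) (α' (1 ⊗ₜ w (Fin.last N)))))) =
      ∑ k, A.ε (∑ i, dx i) (∑ l ∈ Iio k, dy l) •
        br' (Function.update (fun i => β' (β' (1 ⊗ₜ w i))) k
          (br' (Fin.snoc (fun i => β' (1 ⊗ₜ u i)) (α' (1 ⊗ₜ w k))))) := by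
    intro u hu
    simp only [LinearMap.baseChange_tmul, TensorProduct.snoc_one_tmul,
      TensorProduct.update_one_tmul, MultilinearMap.baseChange_one_tmul, ← tmul_smul, ← tmul_sum]
    rw [A.jacobi dx u dy w hu hw]
  set T := br' (Fin.snoc (fun i => β' (1 ⊗ₜ w i.castSucc)) (α' (1 ⊗ₜ w (Fin.last N))))
  have := MultilinearMap.eq_of_forall_one_tmul (p := fun i => A.grading (dx i))
    (f := (LinearMap.applyₗ T).compMultilinearMap
      ((br').curryRight.compLinearMap fun _ => β' ∘ₗ β'))
    (g := ∑ k, A.ε (∑ i, dx i) (∑ l ∈ Iio k, dy l) •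
      ((br').toLinearMap (fun i => β' (β' (1 ⊗ₜ w i))) k).compMultilinearMap
        ((LinearMap.applyₗ (α' (1 ⊗ₜ w k))).compMultilinearMap
          ((br').curryRight.compLinearMap fun _ => β'))) ?_ hx
  · simpa [MultilinearMap.curryRight_apply, MultilinearMap.toLinearMap_apply] using this
  · intro u hu
    simpa [MultilinearMap.curryRight_apply, MultilinearMap.toLinearMap_apply] using pure u hu

theorem baseChange_jacobi (dx : Fin N → Γ) (x : Fin N → C ⊗[K] L) (dy : Fin (N + 1) → Γ)
    (y : Fin (N + 1) → C ⊗[K] L) (hx : ∀ i, x i ∈ (A.grading (dx i)).baseChange C)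
    (hy : ∀ i, y i ∈ (A.grading (dy i)).baseChange C) :
    br' (Fin.snoc (fun i => β' (β' (x i)))
        (br' (Fin.snoc (fun i => β' (y i.castSucc)) (α' (y (Fin.last N)))))) =
      ∑ k, A.ε (∑ i, dx i) (∑ l ∈ Iio k, dy l) •
        br' (Function.update (fun i => β' (β' (y i))) k
          (br' (Fin.snoc (fun i => β' (x i)) (α' (y k))))) := by
  have := MultilinearMap.eq_of_forall_one_tmul (p := fun i => A.grading (dy i))
    (f := ((br').curryRight (fun i => β' (β' (x i)))).compMultilinearMap
      ((br').compLinearMap (Fin.snoc (fun _ => β') α' : Fin (N + 1) → C ⊗[K] L →ₗ[C] C ⊗[K] L)))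
    (g := ∑ k, A.ε (∑ i, dx i) (∑ l ∈ Iio k, dy l) • (br').compLinearMap
      (Function.update (fun _ => β' ∘ₗ β') k ((br').curryRight (fun i => β' (x i)) ∘ₗ α'))) ?_ hy
  · simpa [MultilinearMap.curryRight_apply, Fin.snoc_linearMap_apply,
      Function.update_linearMap_apply] using this
  · intro w hw
    simpa [MultilinearMap.curryRight_apply, Fin.snoc_linearMap_apply,
      Function.update_linearMap_apply] using A.baseChange_jacobi_one_tmul_right dx x dy w hx hw

variable (C) in
noncomputable def baseChange : NBLCA K Γ N (C ⊗[K] L) where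
  grading γ := ((A.grading γ).baseChange C).restrictScalars K
  internal := A.internal.baseChange
  ε := A.ε
  α := (A.α.baseChange C).restrictScalars K
  β := (A.β.baseChange C).restrictScalars K
  bracket := (A.bracket.baseChange C).restrictScalars K
  eps_ne := A.eps_ne
  eps_skew := A.eps_skew
  eps_add_right := A.eps_add_right
  eps_add_left := A.eps_add_left
  α_even γ _ hx := Submodule.baseChange_mono C (Submodule.map_le_iff_le_comap.2 (A.α_even γ))
    (Submodule.map_baseChange_le _ _ (Submodule.mem_map_of_mem hx))
  β_even γ _ hx := Submodule.baseChange_mono C (Submodule.map_le_iff_le_comap.2 (A.β_even γ))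
    (Submodule.map_baseChange_le _ _ (Submodule.mem_map_of_mem hx))
  αβ_comm x := by
    have : A.α ∘ₗ A.β = A.β ∘ₗ A.α := LinearMap.ext A.αβ_comm
    simp only [LinearMap.coe_restrictScalars, ← LinearMap.comp_apply, ← LinearMap.baseChange_comp,
      this]
  bracket_grade d _ hx := by
    refine MultilinearMap.map_mem_of_forall_one_tmul (f := A.bracket.baseChange C)
      (q := (A.grading (∑ i, d i)).baseChange C) (fun y hy => ?_) hx
    rw [MultilinearMap.baseChange_one_tmul]
    exact Submodule.tmul_mem_baseChange_of_mem 1 (A.bracket_grade d y hy)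
  skew := A.baseChange_skew
  jacobi := A.baseChange_jacobi

end NBLCA

/-- The tensor product of a commutative associative `K`-algebra `C` with an
`n`-BiHom-Lie color algebra `L` is an `n`-BiHom-Lie color algebra with
`[a₁⊗x₁,…,aₙ⊗xₙ]' = a₁⋯aₙ ⊗ [x₁,…,xₙ]`, `α'(a⊗x) = a⊗α(x)`, `β'(a⊗x) = a⊗β(x)`,
and grading `(C ⊗ L)_γ = C ⊗ L_γ`. -/
theorem tensor_nBLCA {K : Type*} [Field K] {Γ : Type*} [AddCommGroup Γ] [DecidableEq Γ]
    {N : ℕ} {L : Type*} [AddCommGroup L] [Module K L]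
    {C : Type*} [CommRing C] [Algebra K C]
    (A : NBLCA K Γ N L) :
    ∃ B : NBLCA K Γ N (C ⊗[K] L),
      B.ε = A.ε ∧
      (∀ γ, B.grading γ = LinearMap.range
          (TensorProduct.map (LinearMap.id : C →ₗ[K] C) (A.grading γ).subtype)) ∧
      (∀ (c : C) (x : L), B.α (c ⊗ₜ[K] x) = c ⊗ₜ[K] A.α x) ∧
      (∀ (c : C) (x : L), B.β (c ⊗ₜ[K] x) = c ⊗ₜ[K] A.β x) ∧
      ∀ (c : Fin (N + 1) → C) (x : Fin (N + 1) → L),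
        B.bracket (fun i => c i ⊗ₜ[K] x i) = (∏ i, c i) ⊗ₜ[K] A.bracket x :=
  ⟨A.baseChange C, rfl, fun _ => rfl, fun _ _ => rfl, fun _ _ => rfl,
    A.bracket.baseChange_tmul⟩
end

section
/- Let (L, [·,…,·], ε, α, β) be an n-BiHom-Lie color algebra and γ : L → L a semi-morphism of L. Then L with the bracket {x₁,…,xₙ} := [x₁,…,γ(xᵢ),…,xₙ] (γ applied in a fixed position i), the same ε, α, β, is again an n-BiHom-Lie color algebra. -/
open Finset TensorProduct

/-- Twisting the bracket of an `n`-BiHom-Lie color algebra by a semi-morphism `g`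
applied in a fixed position `i` yields an `n`-BiHom-Lie color algebra. -/
theorem semiMorphism_twist_nBLCA {K : Type*} [Field K] {Γ : Type*} [AddCommGroup Γ]
    [DecidableEq Γ] {N : ℕ} {L : Type*} [AddCommGroup L] [Module K L]
    (A : NBLCA K Γ N L) (g : L →ₗ[K] L)
    (hev : ∀ (γ : Γ) (x : L), x ∈ A.grading γ → g x ∈ A.grading γ)
    (hcα : ∀ x, g (A.α x) = A.α (g x)) (hcβ : ∀ x, g (A.β x) = A.β (g x))
    (hsemi : ∀ (j : Fin (N + 1)) (x : Fin (N + 1) → L),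
      g (A.bracket x) = A.bracket (Function.update x j (g (x j))))
    (i : Fin (N + 1)) :
    ∃ B : NBLCA K Γ N L,
      B.ε = A.ε ∧ B.grading = A.grading ∧ B.α = A.α ∧ B.β = A.β ∧
      ∀ x : Fin (N + 1) → L,
        B.bracket x = A.bracket (Function.update x i (g (x i))) := by
  have h1 : ∀ (f : Fin N → L) (z : L),
      g (A.bracket (Fin.snoc f z)) = A.bracket (Fin.snoc f (g z)) := by
    intro f z
    rw [hsemi (Fin.last N)]
    simp [Fin.update_snoc_last]
  have h2 : ∀ (k : Fin (N + 1)) (f : Fin (N + 1) → L) (z : L),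
      g (A.bracket (Function.update f k z)) = A.bracket (Function.update f k (g z)) := by
    intro k f z
    rw [hsemi k]
    simp
  refine ⟨{ A with
      bracket := g.compMultilinearMap A.bracket
      bracket_grade := ?_
      skew := ?_
      jacobi := ?_ }, rfl, rfl, rfl, rfl, ?_⟩
  · intro d x hx
    exact hev _ _ (A.bracket_grade d x hx)
  · intro d x hx k
    simp only [LinearMap.compMultilinearMap_apply]
    rw [A.skew d x hx k, map_smul]
  · intro dx x dy y hx hy
    simp only [LinearMap.compMultilinearMap_apply]
    calc g (A.bracket (Fin.snoc (fun i : Fin N => A.β (A.β (x i)))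
            (g (A.bracket (Fin.snoc (fun i : Fin N => A.β (y i.castSucc))
              (A.α (y (Fin.last N))))))))
        = g (g (A.bracket (Fin.snoc (fun i : Fin N => A.β (A.β (x i)))
            (A.bracket (Fin.snoc (fun i : Fin N => A.β (y i.castSucc))
              (A.α (y (Fin.last N)))))))) := by rw [← h1]
      _ = g (g (∑ k : Fin (N + 1), A.ε (∑ i, dx i) (∑ l ∈ Finset.Iio k, dy l) •
            A.bracket (Function.update (fun i => A.β (A.β (y i))) k
              (A.bracket (Fin.snoc (fun i : Fin N => A.β (x i)) (A.α (y k))))))) := by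
          rw [A.jacobi dx x dy y hx hy]
      _ = ∑ k : Fin (N + 1), A.ε (∑ i, dx i) (∑ l ∈ Finset.Iio k, dy l) •
            g (g (A.bracket (Function.update (fun i => A.β (A.β (y i))) k
              (A.bracket (Fin.snoc (fun i : Fin N => A.β (x i)) (A.α (y k))))))) := by
          rw [map_sum, map_sum]
          exact Finset.sum_congr rfl fun k _ => by rw [map_smul, map_smul]
      _ = _ := by
          refine Finset.sum_congr rfl fun k _ => ?_
          rw [← h2]
  · intro x
    simp only [LinearMap.compMultilinearMap_apply]
    rw [hsemi i]
end

section
/- Let (L, [·,…,·], ε, α, β) be a multiplicative n-BiHom-Lie color algebra. If D is an (αᵏ, βʳ)-derivation of degree d and D' an (αˡ, βˢ)-derivation of degree d', then their ε-commutator [D,D'] = D∘D' − ε(d,d') D'∘D is an (α^{k+l}, β^{r+s})-derivation of degree d+d'. -/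
open Finset TensorProduct

/-! Expanding `D (D' [x₁, …, xₙ])` by the two Leibniz rules gives a double sum over the
position `i` hit by `D'` and the position `j` hit by `D`, and likewise for `D' (D [x₁, …, xₙ])`.
The diagonal terms `i = j` assemble, by multilinearity, into the Leibniz rule for the
`ε`-commutator. Off the diagonal the two expansions differ only in the order in which the sign of
`D` passing `D' xᵢ` and the sign of `D'` passing `D xⱼ` are collected, and
`ε(d, d') ε(d', d) = 1` makes them cancel in `D ∘ D' - ε(d, d') D' ∘ D`. -/

lemma Finset.sum_Iio_update_add {ι M : Type*} [LinearOrder ι] [LocallyFiniteOrderBot ι]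
    [AddCommMonoid M] (f : ι → M) (i j : ι) (c : M) :
    ∑ m ∈ Iio j, Function.update f i (f i + c) m = ∑ m ∈ Iio j, f m + if i < j then c else 0 := by
  have h : Function.update f i (f i + c) = f + Pi.single i c := by
    ext m
    rcases eq_or_ne m i with rfl | hm <;> simp [*]
  simp [h, sum_add_distrib, sum_pi_single']

namespace NBLCA

variable {K : Type*} [Field K] {Γ : Type*} [AddCommGroup Γ] [DecidableEq Γ] {N : ℕ}
  {L : Type*} [AddCommGroup L] [Module K L] {A : NBLCA K Γ N L}

lemma commute_α_β : Commute A.α A.β :=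
  LinearMap.ext fun x => A.αβ_comm x

lemma commutesTw_iff {D : L →ₗ[K] L} : A.CommutesTw D ↔ Commute D A.α ∧ Commute D A.β := by
  simp only [CommutesTw, Commute, SemiconjBy, LinearMap.ext_iff, Module.End.mul_apply]

lemma tw_tw (k r l s : ℕ) (x : L) : A.tw k r (A.tw l s x) = A.tw (k + l) (r + s) x := by
  have hcomm : A.α ^ k * A.β ^ s = A.β ^ s * A.α ^ k := (commute_α_β.pow_pow k s).eq
  have h : A.tw k r * A.tw l s = A.tw (k + l) (r + s) := by
    simp only [tw, ← Module.End.mul_eq_comp, pow_add, mul_assoc, ← mul_assoc (A.α ^ k), hcomm]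
  exact LinearMap.congr_fun h x

lemma tw_mem_grading {k r : ℕ} {γ : Γ} {x : L} (hx : x ∈ A.grading γ) :
    A.tw k r x ∈ A.grading γ :=
  Module.End.pow_apply_mem_of_forall_mem r (A.β_even γ) _
    (Module.End.pow_apply_mem_of_forall_mem k (A.α_even γ) x hx)

lemma CommutesTw.tw_apply {D : L →ₗ[K] L} (h : A.CommutesTw D) (k r : ℕ) (x : L) :
    D (A.tw k r x) = A.tw k r (D x) := by
  obtain ⟨hα, hβ⟩ := commutesTw_iff.1 h
  exact LinearMap.congr_fun ((hβ.pow_right r).mul_right (hα.pow_right k)).eq x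

lemma tw_update_tw {ι : Type*} [DecidableEq ι] (k r l s : ℕ) (x : ι → L) (i : ι) (y : L) :
    (fun m => A.tw k r (Function.update (fun m => A.tw l s (x m)) i y m))
      = Function.update (fun m => A.tw (k + l) (r + s) (x m)) i (A.tw k r y) := by
  funext m
  rw [Function.apply_update (fun _ => A.tw k r)]
  simp only [tw_tw]

lemma update_tw_mem_grading {ι : Type*} [DecidableEq ι] {dx : ι → Γ} {x : ι → L}
    (hx : ∀ m, x m ∈ A.grading (dx m)) (l s : ℕ) (i : ι) {y : L} {e : Γ}
    (hy : y ∈ A.grading e) (m : ι) :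
    Function.update (fun m => A.tw l s (x m)) i y m ∈ A.grading (Function.update dx i e m) := by
  rcases eq_or_ne m i with rfl | hm
  · simpa using hy
  · simpa [Function.update_of_ne hm] using tw_mem_grading (hx m)

variable {k r l s : ℕ} {d d' : Γ} {D D' : L →ₗ[K] L}

lemma HasDegree.comp (hD : A.HasDegree d D) (hD' : A.HasDegree d' D') :
    A.HasDegree (d + d') (D ∘ₗ D') := fun γ x hx => by
  simpa [add_assoc, add_comm d'] using hD _ _ (hD' γ x hx)

lemma HasDegree.smul (hD : A.HasDegree d D) (c : K) : A.HasDegree d (c • D) :=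
  fun γ x hx => Submodule.smul_mem _ c (hD γ x hx)

lemma HasDegree.sub (hD : A.HasDegree d D) (hD' : A.HasDegree d D') : A.HasDegree d (D - D') :=
  fun γ x hx => Submodule.sub_mem _ (hD γ x hx) (hD' γ x hx)

lemma CommutesTw.comp (hD : A.CommutesTw D) (hD' : A.CommutesTw D') :
    A.CommutesTw (D ∘ₗ D') :=
  ⟨fun x => by simp only [LinearMap.comp_apply, hD.1, hD'.1],
    fun x => by simp only [LinearMap.comp_apply, hD.2, hD'.2]⟩

lemma CommutesTw.smul (hD : A.CommutesTw D) (c : K) : A.CommutesTw (c • D) :=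
  ⟨fun x => by simp only [LinearMap.smul_apply, hD.1, map_smul],
    fun x => by simp only [LinearMap.smul_apply, hD.2, map_smul]⟩

lemma CommutesTw.sub (hD : A.CommutesTw D) (hD' : A.CommutesTw D') : A.CommutesTw (D - D') :=
  ⟨fun x => by simp only [LinearMap.sub_apply, hD.1, hD'.1, map_sub],
    fun x => by simp only [LinearMap.sub_apply, hD.2, hD'.2, map_sub]⟩

lemma eps_mul_eps_ite_of_ne {ι : Type*} [LinearOrder ι] {i j : ι} (hij : i ≠ j)
    (a b X Y : Γ) :
    A.ε b X * A.ε a (Y + if i < j then b else 0)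
      = A.ε a b * (A.ε a Y * A.ε b (X + if j < i then a else 0)) := by
  rcases hij.lt_or_gt with h | h
  · simp only [if_pos h, if_neg h.asymm, add_zero, A.eps_add_right]
    ring
  · simp only [if_pos h, if_neg h.asymm, add_zero, A.eps_add_right]
    linear_combination (-(A.ε b X * A.ε a Y)) * A.eps_skew b a

lemma IsDer.apply_apply_bracket (hD : A.IsDer k r d D) (hD' : A.IsDer l s d' D')
    {dx : Fin (N + 1) → Γ} {x : Fin (N + 1) → L} (hx : ∀ i, x i ∈ A.grading (dx i)) :
    D (D' (A.bracket x)) = ∑ i, ∑ j, (A.ε d' (∑ m ∈ Iio i, dx m) *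
      A.ε d (∑ m ∈ Iio j, dx m + if i < j then d' else 0)) •
        A.bracket (Function.update
          (Function.update (fun m => A.tw (k + l) (r + s) (x m)) i (A.tw k r (D' (x i)))) j
          (D (Function.update (fun m => A.tw l s (x m)) i (D' (x i)) j))) := by
  rw [hD'.2.2 dx x hx, map_sum]
  refine sum_congr rfl fun i _ => ?_
  rw [map_smul, hD.2.2 _ _ (update_tw_mem_grading hx l s i (hD'.1 _ _ (hx i))), smul_sum]
  refine sum_congr rfl fun j _ => ?_
  rw [smul_smul, Finset.sum_Iio_update_add, tw_update_tw]

lemma IsDer.commutator_apply_bracket (hD : A.IsDer k r d D) (hD' : A.IsDer l s d' D')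
    {dx : Fin (N + 1) → Γ} {x : Fin (N + 1) → L} (hx : ∀ i, x i ∈ A.grading (dx i)) :
    (D ∘ₗ D' - A.ε d d' • (D' ∘ₗ D)) (A.bracket x) =
      ∑ i, A.ε (d + d') (∑ m ∈ Iio i, dx m) •
        A.bracket (Function.update (fun j => A.tw (k + l) (r + s) (x j)) i
          ((D ∘ₗ D' - A.ε d d' • (D' ∘ₗ D)) (x i))) := by
  simp only [LinearMap.sub_apply, LinearMap.comp_apply, LinearMap.smul_apply]
  rw [hD.apply_apply_bracket hD' hx, hD'.apply_apply_bracket hD hx, add_comm l k, add_comm s r,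
    sum_comm, smul_sum, ← sum_sub_distrib]
  refine sum_congr rfl fun i _ => ?_
  rw [smul_sum, ← sum_sub_distrib, Fintype.sum_eq_single i]
  · simp only [lt_irrefl, if_false, add_zero, Function.update_self, Function.update_idem,
      MultilinearMap.map_update_sub, MultilinearMap.map_update_smul, A.eps_add_left, smul_smul]
    module
  · intro j hji
    rw [sub_eq_zero, Function.update_of_ne hji, Function.update_of_ne hji.symm,
      hD.2.1.tw_apply, hD'.2.1.tw_apply, Function.update_comm hji.symm, smul_smul]
    exact congrArg (· • _) (eps_mul_eps_ite_of_ne hji _ _ _ _)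

end NBLCA

theorem commutator_isDer_general {K : Type*} [Field K] {Γ : Type*} [AddCommGroup Γ] [DecidableEq Γ]
    {N : ℕ} {L : Type*} [AddCommGroup L] [Module K L]
    (A : NBLCA K Γ N L) (k r l s : ℕ) (d d' : Γ) (D D' : L →ₗ[K] L)
    (hD : A.IsDer k r d D) (hD' : A.IsDer l s d' D') :
    A.IsDer (k + l) (r + s) (d + d') (D ∘ₗ D' - A.ε d d' • (D' ∘ₗ D)) :=
  ⟨(hD.1.comp hD'.1).sub (add_comm d' d ▸ (hD'.1.comp hD.1).smul _),
    (hD.2.1.comp hD'.2.1).sub ((hD'.2.1.comp hD.2.1).smul _),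
    fun _ _ hx => hD.commutator_apply_bracket hD' hx⟩

/-- The `ε`-commutator of an `(αᵏ,βʳ)`-derivation of degree `d` and an `(αˡ,βˢ)`-derivation
of degree `d'` is an `(α^{k+l},β^{r+s})`-derivation of degree `d+d'`. -/
theorem commutator_isDer {K : Type*} [Field K] {Γ : Type*} [AddCommGroup Γ] [DecidableEq Γ]
    {N : ℕ} {L : Type*} [AddCommGroup L] [Module K L]
    (A : NBLCA K Γ N L) (hmul : A.IsMultiplicative)
    (k r l s : ℕ) (d d' : Γ) (D D' : L →ₗ[K] L)
    (hD : A.IsDer k r d D) (hD' : A.IsDer l s d' D') :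
    A.IsDer (k + l) (r + s) (d + d') (D ∘ₗ D' - A.ε d d' • (D' ∘ₗ D)) :=
  commutator_isDer_general A k r l s d d' D D' hD hD'
end

section
/- Let (L, [·,…,·], ε, α, β) be a multiplicative n-BiHom-Lie color algebra. If D₁ is in the (αᵏ,βʳ)-centroid and D₂ in the (αˡ,βˢ)-centroid of L, then the ε-commutator [D₁,D₂] = D₁D₂ − ε(d₁,d₂)D₂D₁ lies in the (α^{k+l}, β^{r+s})-centroid of L. -/
open Finset TensorProduct

section Aux

variable {K : Type*} [Field K] {Γ : Type*} [AddCommGroup Γ] [DecidableEq Γ]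
  {N : ℕ} {L : Type*} [AddCommGroup L] [Module K L]

lemma tw_comm_aux (A : NBLCA K Γ N L) (k : ℕ) (x : L) :
    (A.α ^ k) (A.β x) = A.β ((A.α ^ k) x) := by
  induction k generalizing x with
  | zero => simp
  | succ n ih =>
    rw [pow_succ, Module.End.mul_apply, Module.End.mul_apply, A.αβ_comm, ih]

lemma tw_tw (A : NBLCA K Γ N L) (k r l s : ℕ) (x : L) :
    A.tw k r (A.tw l s x) = A.tw (k + l) (r + s) x := by
  unfold NBLCA.tw
  simp only [LinearMap.comp_apply]
  have h : ∀ (m : ℕ) (y : L), (A.α ^ m) ((A.β ^ s) y) = (A.β ^ s) ((A.α ^ m) y) := by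
    intro m y
    induction s generalizing y with
    | zero => simp
    | succ n ih =>
      rw [pow_succ', Module.End.mul_apply, Module.End.mul_apply, tw_comm_aux, ih]
  rw [h, ← LinearMap.comp_apply (A.β ^ r), ← LinearMap.comp_apply (A.α ^ k),
    ← Module.End.mul_eq_comp, ← Module.End.mul_eq_comp, ← pow_add, ← pow_add]

lemma tw_mem (A : NBLCA K Γ N L) (k r : ℕ) (γ : Γ) (x : L) (hx : x ∈ A.grading γ) :
    A.tw k r x ∈ A.grading γ := by
  unfold NBLCA.tw
  simp only [LinearMap.comp_apply]
  have h1 : (A.α ^ k) x ∈ A.grading γ := by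
    induction k with
    | zero => simpa
    | succ n ih => rw [pow_succ', Module.End.mul_apply]; exact A.α_even γ _ ih
  induction r with
  | zero => simpa
  | succ n ih => rw [pow_succ', Module.End.mul_apply]; exact A.β_even γ _ ih

end Aux

/-- The `ε`-commutator of an element of the `(αᵏ,βʳ)`-centroid and an element of the
`(αˡ,βˢ)`-centroid lies in the `(α^{k+l},β^{r+s})`-centroid. -/
theorem commutator_isCent {K : Type*} [Field K] {Γ : Type*} [AddCommGroup Γ] [DecidableEq Γ]
    {N : ℕ} {L : Type*} [AddCommGroup L] [Module K L]
    (A : NBLCA K Γ N L) (hmul : A.IsMultiplicative)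
    (k r l s : ℕ) (d₁ d₂ : Γ) (D₁ D₂ : L →ₗ[K] L)
    (h₁ : A.IsCent k r d₁ D₁) (h₂ : A.IsCent l s d₂ D₂) :
    A.IsCent (k + l) (r + s) (d₁ + d₂) (D₁ ∘ₗ D₂ - A.ε d₁ d₂ • (D₂ ∘ₗ D₁))  := by
  obtain ⟨hdeg₁, ⟨hα₁, hβ₁⟩, hc₁⟩ := h₁
  obtain ⟨hdeg₂, ⟨hα₂, hβ₂⟩, hc₂⟩ := h₂
  refine ⟨?_, ⟨?_, ?_⟩, ?_⟩
  · intro γ x hx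
    simp only [LinearMap.sub_apply, LinearMap.smul_apply, LinearMap.comp_apply]
    refine Submodule.sub_mem _ ?_ (Submodule.smul_mem _ _ ?_)
    · have := hdeg₁ _ _ (hdeg₂ γ x hx)
      rwa [add_assoc, add_comm d₂ d₁] at this
    · have := hdeg₂ _ _ (hdeg₁ γ x hx)
      rwa [add_assoc] at this
  · intro x
    simp only [LinearMap.sub_apply, LinearMap.smul_apply, LinearMap.comp_apply,
      hα₁, hα₂, map_sub, map_smul]
  · intro x
    simp only [LinearMap.sub_apply, LinearMap.smul_apply, LinearMap.comp_apply,
      hβ₁, hβ₂, map_sub, map_smul]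
  · intro i dx x hx
    have hx₂ : ∀ j, Function.update (fun j => A.tw l s (x j)) i (D₂ (x i)) j ∈
        A.grading (Function.update dx i (dx i + d₂) j) := by
      intro j
      rcases eq_or_ne j i with rfl | hj
      · simp only [Function.update_self]
        exact hdeg₂ _ _ (hx j)
      · simp only [Function.update_of_ne hj]
        exact tw_mem A l s _ _ (hx j)
    have hx₁ : ∀ j, Function.update (fun j => A.tw k r (x j)) i (D₁ (x i)) j ∈
        A.grading (Function.update dx i (dx i + d₁) j) := by
      intro j
      rcases eq_or_ne j i with rfl | hj
      · simp only [Function.update_self]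
        exact hdeg₁ _ _ (hx j)
      · simp only [Function.update_of_ne hj]
        exact tw_mem A k r _ _ (hx j)
    have hS₂ : ∑ m ∈ Finset.Iio i, Function.update dx i (dx i + d₂) m
        = ∑ m ∈ Finset.Iio i, dx m := by
      refine Finset.sum_congr rfl fun m hm => ?_
      rw [Function.update_of_ne (Finset.mem_Iio.mp hm).ne]
    have hS₁ : ∑ m ∈ Finset.Iio i, Function.update dx i (dx i + d₁) m
        = ∑ m ∈ Finset.Iio i, dx m := by
      refine Finset.sum_congr rfl fun m hm => ?_
      rw [Function.update_of_ne (Finset.mem_Iio.mp hm).ne]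
    have key : ∀ (D : L →ₗ[K] L) (y : L),
        Function.update (fun j => A.tw k r
            (Function.update (fun j => A.tw l s (x j)) i (D (x i)) j)) i y
          = Function.update (fun j => A.tw (k + l) (r + s) (x j)) i y := by
      intro D y
      funext j
      rcases eq_or_ne j i with rfl | hj
      · simp
      · simp only [Function.update_of_ne hj, tw_tw]
    have e₁ : D₁ (D₂ (A.bracket x)) = (A.ε d₁ (∑ m ∈ Finset.Iio i, dx m) *
        A.ε d₂ (∑ m ∈ Finset.Iio i, dx m)) •
        A.bracket (Function.update (fun j => A.tw (k + l) (r + s) (x j)) i (D₁ (D₂ (x i)))) := by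
      rw [hc₂ i dx x hx, map_smul, hc₁ i _ _ hx₂, hS₂, Function.update_self]
      rw [mul_comm, mul_smul]
      rw [key]
    have e₂ : D₂ (D₁ (A.bracket x)) = (A.ε d₁ (∑ m ∈ Finset.Iio i, dx m) *
        A.ε d₂ (∑ m ∈ Finset.Iio i, dx m)) •
        A.bracket (Function.update (fun j => A.tw (k + l) (r + s) (x j)) i (D₂ (D₁ (x i)))) := by
      rw [hc₁ i dx x hx, map_smul, hc₂ i _ _ hx₁, hS₁, Function.update_self, mul_smul]
      have key' : ∀ y : L,
          Function.update (fun j => A.tw l s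
              (Function.update (fun j => A.tw k r (x j)) i (D₁ (x i)) j)) i y
            = Function.update (fun j => A.tw (k + l) (r + s) (x j)) i y := by
        intro y
        funext j
        rcases eq_or_ne j i with rfl | hj
        · simp
        · simp only [Function.update_of_ne hj, tw_tw, Nat.add_comm l k, Nat.add_comm s r]
      rw [key']
    simp only [LinearMap.sub_apply, LinearMap.smul_apply, LinearMap.comp_apply]
    rw [e₁, e₂, A.eps_add_left, smul_comm (A.ε d₁ d₂), ← smul_sub,
      ← MultilinearMap.map_update_smul, ← MultilinearMap.map_update_sub]
end

section
/- Let (L, [·,…,·], ε, α, β) be a multiplicative n-BiHom-Lie color algebra over a field whose characteristic is 0 or does not divide n−1. Then the set of central (αᵏ,βʳ)-derivations equals the intersection of the (αᵏ,βʳ)-centroid and the (αᵏ,βʳ)-derivations: ZDer(L) = C(L) ∩ Der(L). -/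
open Finset TensorProduct

/-- If the characteristic of `K` is `0` or does not divide `n - 1` (here `n - 1 = N`),
then the central `(αᵏ,βʳ)`-derivations are exactly the maps lying in both the
`(αᵏ,βʳ)`-centroid and the `(αᵏ,βʳ)`-derivations. -/
theorem zDer_eq_cent_inter_der {K : Type*} [Field K] {Γ : Type*} [AddCommGroup Γ]
    [DecidableEq Γ] {N : ℕ} {L : Type*} [AddCommGroup L] [Module K L]
    (A : NBLCA K Γ N L) (hmul : A.IsMultiplicative) (hchar : (N : K) ≠ 0)
    (k r : ℕ) (d : Γ) (D : L →ₗ[K] L) :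
    A.IsZDer k r d D ↔ (A.IsCent k r d D ∧ A.IsDer k r d D) := by
  constructor
  · rintro ⟨hd, hc, hz⟩
    refine ⟨⟨hd, hc, ?_⟩, hd, hc, ?_⟩
    · intro i dx x hx
      obtain ⟨h0, h1⟩ := hz dx x hx
      rw [h0, h1 i]
    · intro dx x hx
      obtain ⟨h0, h1⟩ := hz dx x hx
      rw [h0]
      exact (Finset.sum_eq_zero fun i _ => h1 i).symm
  · rintro ⟨⟨hd, hc, hcent⟩, _, _, hder⟩
    refine ⟨hd, hc, ?_⟩
    intro dx x hx
    set T := D (A.bracket x) with hT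
    have heach : ∀ i : Fin (N + 1), A.ε d (∑ l ∈ Finset.Iio i, dx l) •
        A.bracket (Function.update (fun j => A.tw k r (x j)) i (D (x i))) = T :=
      fun i => (hcent i dx x hx).symm
    have hsum : T = (N + 1) • T := by
      calc T = ∑ i : Fin (N + 1), A.ε d (∑ l ∈ Finset.Iio i, dx l) •
          A.bracket (Function.update (fun j => A.tw k r (x j)) i (D (x i))) := hder dx x hx
        _ = ∑ _i : Fin (N + 1), T := Finset.sum_congr rfl fun i _ => heach i
        _ = (N + 1) • T := by simp [Finset.card_univ]
    have hN : (N : K) • T = 0 := by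
      have : N • T = 0 := by
        have := hsum
        rw [succ_nsmul] at this
        linear_combination (norm := abel) this.symm
      rw [Nat.cast_smul_eq_nsmul, this]
    have hT0 : T = 0 := by
      rcases smul_eq_zero.mp hN with h | h
      · exact absurd h hchar
      · exact h
    exact ⟨hT0, fun i => by rw [heach i, hT0]⟩
end
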